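/- arXiv:2005.06696 — 3 statements merged into one kernel-verified Lean document; each statement's English description precedes it below -/
import Mathlib

section
/- Let f : ℝ_{>0}^K → ℝ_{>0}^K be a standard interference function, i.e., (positivity) f(d) > 0 componentwise for all d > 0; (monotonicity) d ≥ d' componentwise implies f(d) ≥ f(d') componentwise; (scalability) for all ζ > 1 and all d, ζ·f(d) > f(ζ·d) componentwise. If f has a fixed point, then this fixed point is unique. -/
lemma exists_le_div_smul {ι : Type*} [Finite ι] [Nonempty ι] (d d' : ι → ℝ)
    (hd' : ∀ i, 0 < d' i) : ∃ j, d ≤ (d j / d' j) • d' := by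
  obtain ⟨j, hj⟩ := Finite.exists_max fun i => d i / d' i
  refine ⟨j, fun i => ?_⟩
  calc d i = d i / d' i * d' i := (div_mul_cancel₀ _ (hd' i).ne').symm
    _ ≤ d j / d' j * d' i := mul_le_mul_of_nonneg_right (hj i) (hd' i).le

/-- If `d ≰ d'`, the multiple `ζ • d'` above `d` touches it at some `j` with `ζ > 1`; there
monotonicity and scalability give `d j = f d j ≤ f (ζ • d') j < ζ * f d' j = d j`. -/
lemma le_of_isFixedPt_of_scalable {ι : Type*} [Finite ι] (f : (ι → ℝ) → (ι → ℝ))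
    (hmono : ∀ d d' : ι → ℝ, (∀ i, 0 < d' i) → (∀ i, 0 < d i) → d' ≤ d → f d' ≤ f d)
    (hscal : ∀ ζ : ℝ, 1 < ζ → ∀ d : ι → ℝ, (∀ i, 0 < d i) → ∀ i, f (ζ • d) i < ζ * f d i)
    {d d' : ι → ℝ} (hd : ∀ i, 0 < d i) (hd' : ∀ i, 0 < d' i)
    (hfix : f d = d) (hfix' : f d' = d') : d ≤ d' := by
  by_contra hnle
  obtain ⟨i₀, hi₀⟩ : ∃ i, d' i < d i := by simpa [Pi.le_def] using hnle
  have : Nonempty ι := ⟨i₀⟩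
  obtain ⟨j, hle⟩ := exists_le_div_smul d d' hd'
  set ζ := d j / d' j with hζ
  have hζ_gt_one : 1 < ζ := by
    refine lt_of_mul_lt_mul_right ?_ (hd' i₀).le
    calc 1 * d' i₀ < d i₀ := by rwa [one_mul]
      _ ≤ ζ * d' i₀ := hle i₀
  have hζd'_pos : ∀ i, 0 < (ζ • d') i := fun i => mul_pos (one_pos.trans hζ_gt_one) (hd' i)
  have : d j < d j :=
    calc d j = f d j := by rw [hfix]
      _ ≤ f (ζ • d') j := hmono _ _ hd hζd'_pos hle j
      _ < ζ * f d' j := hscal ζ hζ_gt_one d' hd' j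
      _ = d j := by rw [hfix', hζ, div_mul_cancel₀ _ (hd' j).ne']
  exact lt_irrefl _ this

theorem stmt6_general {K : ℕ} (f : (Fin K → ℝ) → (Fin K → ℝ))
    (hmono : ∀ d d' : Fin K → ℝ, (∀ i, 0 < d' i) → (∀ i, 0 < d i) →
      (∀ i, d' i ≤ d i) → ∀ i, f d' i ≤ f d i)
    (hscal : ∀ ζ : ℝ, 1 < ζ → ∀ d : Fin K → ℝ, (∀ i, 0 < d i) →
      ∀ i, f (ζ • d) i < ζ * f d i)
    (d d' : Fin K → ℝ) (hd : ∀ i, 0 < d i) (hd' : ∀ i, 0 < d' i)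
    (hfix : f d = d) (hfix' : f d' = d') :
    d = d' :=
  le_antisymm (le_of_isFixedPt_of_scalable f hmono hscal hd hd' hfix hfix')
    (le_of_isFixedPt_of_scalable f hmono hscal hd' hd hfix' hfix)

/-- Yates' framework: a standard interference function (positive, monotone, scalable on the
positive orthant) has at most one fixed point with positive components. -/
theorem stmt6 {K : ℕ} (f : (Fin K → ℝ) → (Fin K → ℝ))
    (hpos : ∀ d : Fin K → ℝ, (∀ i, 0 < d i) → ∀ i, 0 < f d i)
    (hmono : ∀ d d' : Fin K → ℝ, (∀ i, 0 < d' i) → (∀ i, 0 < d i) →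
      (∀ i, d' i ≤ d i) → ∀ i, f d' i ≤ f d i)
    (hscal : ∀ ζ : ℝ, 1 < ζ → ∀ d : Fin K → ℝ, (∀ i, 0 < d i) →
      ∀ i, f (ζ • d) i < ζ * f d i)
    (d d' : Fin K → ℝ) (hd : ∀ i, 0 < d i) (hd' : ∀ i, 0 < d' i)
    (hfix : f d = d) (hfix' : f d' = d') :
    d = d' :=
  stmt6_general f hmono hscal d d' hd hd' hfix hfix'
end

section
/- With the setup of the map f_k(d) = ρ'_k · ĝ_kᴴ F(d)⁻¹ ĝ_k where F(d) = α·∑_{k'} (ρ'_{k'} u_{k'} / d_{k'})·J_{k'} + I_M, each J_{k'} Hermitian positive definite, and all constants positive: if d, d' ∈ ℝ_{>0}^K satisfy d ≥ d' componentwise, then F(d') − F(d) is positive semidefinite, hence F(d)⁻¹ − F(d')⁻¹ is positive semidefinite, and therefore f_k(d) ≥ f_k(d') for all k (monotonicity of the interference function). -/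
/-!
Each weight `ρ'_k u_k / d_k` decreases as `d_k` grows and multiplies a positive semidefinite
`J_k`, so `F` is antitone in `d` for the Loewner order, and `F d` is positive definite. Matrix
inversion is operator antitone on positive definite matrices (a C⋆-algebra fact, applied to
`Matrix n n ℂ` with the L² operator norm), and every quadratic form `x ↦ re (xᴴ A x)` is
monotone in `A`.
-/

open Matrix
open scoped ComplexOrder

namespace Matrix

variable {n ι : Type*}

theorem posSemidef_sum_ofReal_smul (s : Finset ι) {c : ι → ℝ} (hc : ∀ i ∈ s, 0 ≤ c i)
    {J : ι → Matrix n n ℂ} (hJ : ∀ i ∈ s, (J i).PosSemidef) :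
    (∑ i ∈ s, (c i : ℂ) • J i).PosSemidef :=
  posSemidef_sum s fun i hi => (hJ i hi).smul (Complex.zero_le_real.mpr (hc i hi))

section AffinePencil

variable [Fintype ι] [DecidableEq n] {α : ℝ} {J : ι → Matrix n n ℂ}

theorem posDef_smul_sum_ofReal_smul_add_one (hα : 0 ≤ α) {c : ι → ℝ} (hc : ∀ i, 0 ≤ c i)
    (hJ : ∀ i, (J i).PosSemidef) :
    ((α : ℂ) • ∑ i, (c i : ℂ) • J i + 1).PosDef :=
  PosDef.posSemidef_add ((posSemidef_sum_ofReal_smul _ (fun i _ => hc i) fun i _ => hJ i).smul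
    (Complex.zero_le_real.mpr hα)) PosDef.one

theorem posSemidef_smul_sum_ofReal_smul_add_one_sub (hα : 0 ≤ α) {c c' : ι → ℝ}
    (hcc' : ∀ i, c i ≤ c' i) (hJ : ∀ i, (J i).PosSemidef) :
    (((α : ℂ) • ∑ i, (c' i : ℂ) • J i + 1) - ((α : ℂ) • ∑ i, (c i : ℂ) • J i + 1)).PosSemidef := by
  have hsub : ((α : ℂ) • ∑ i, (c' i : ℂ) • J i + 1) - ((α : ℂ) • ∑ i, (c i : ℂ) • J i + 1) =
      (α : ℂ) • ∑ i, ((c' i - c i : ℝ) : ℂ) • J i := by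
    simp only [Complex.ofReal_sub, sub_smul, Finset.sum_sub_distrib, smul_sub]
    abel
  rw [hsub]
  exact (posSemidef_sum_ofReal_smul _ (fun i _ => sub_nonneg.mpr (hcc' i)) fun i _ => hJ i).smul
    (Complex.zero_le_real.mpr hα)

end AffinePencil

variable [Fintype n]

theorem PosSemidef.re_dotProduct_mulVec_le {𝕜 : Type*} [RCLike 𝕜] {A B : Matrix n n 𝕜}
    (hAB : (B - A).PosSemidef) (x : n → 𝕜) :
    RCLike.re (star x ⬝ᵥ A *ᵥ x) ≤ RCLike.re (star x ⬝ᵥ B *ᵥ x) := by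
  have h := hAB.re_dotProduct_nonneg x
  rw [sub_mulVec, dotProduct_sub, map_sub] at h
  linarith

open scoped MatrixOrder Matrix.Norms.L2Operator in
theorem PosDef.posSemidef_inv_sub_inv [DecidableEq n] {A B : Matrix n n ℂ} (hA : A.PosDef)
    (hAB : (B - A).PosSemidef) : (A⁻¹ - B⁻¹).PosSemidef := by
  rw [nonsing_inv_eq_ringInverse, nonsing_inv_eq_ringInverse]
  exact CStarAlgebra.ringInverse_le_ringInverse hAB hA.isStrictlyPositive

end Matrix

theorem stmt9_general {M K : ℕ} (α : ℝ) (hα : 0 < α)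
    (ρ' u : Fin K → ℝ) (hρ' : ∀ k, 0 < ρ' k) (hu : ∀ k, 0 < u k)
    (g : Fin K → Fin M → ℂ) (J : Fin K → Matrix (Fin M) (Fin M) ℂ)
    (hJ : ∀ k', (J k').PosDef)
    (F : (Fin K → ℝ) → Matrix (Fin M) (Fin M) ℂ)
    (hF : ∀ d, F d = (α : ℂ) • ∑ k', ((ρ' k' * u k' / d k' : ℝ) : ℂ) • J k'
      + (1 : Matrix (Fin M) (Fin M) ℂ))
    (d d' : Fin K → ℝ) (hd' : ∀ k', 0 < d' k')
    (hdd : ∀ k', d' k' ≤ d k') :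
    (F d' - F d).PosSemidef ∧ ((F d)⁻¹ - (F d')⁻¹).PosSemidef ∧
      ∀ k, ρ' k * (star (g k) ⬝ᵥ (F d')⁻¹.mulVec (g k)).re ≤
        ρ' k * (star (g k) ⬝ᵥ (F d)⁻¹.mulVec (g k)).re := by
  have hρu : ∀ k, 0 ≤ ρ' k * u k := fun k => (mul_pos (hρ' k) (hu k)).le
  have hJ' : ∀ k, (J k).PosSemidef := fun k => (hJ k).posSemidef
  have hFd : (F d).PosDef := by
    rw [hF]
    exact posDef_smul_sum_ofReal_smul_add_one hα.le
      (fun k => div_nonneg (hρu k) ((hd' k).le.trans (hdd k))) hJ'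
  have hF_sub : (F d' - F d).PosSemidef := by
    rw [hF, hF]
    exact posSemidef_smul_sum_ofReal_smul_add_one_sub hα.le
      (fun k => div_le_div_of_nonneg_left (hρu k) (hd' k) (hdd k)) hJ'
  have hFinv_sub := hFd.posSemidef_inv_sub_inv hF_sub
  exact ⟨hF_sub, hFinv_sub, fun k =>
    mul_le_mul_of_nonneg_left (hFinv_sub.re_dotProduct_mulVec_le (g k)) (hρ' k).le⟩

/-- Monotonicity of the interference function: if `d ≥ d'` componentwise then
`F(d') - F(d)` is PSD, hence `F(d)⁻¹ - F(d')⁻¹` is PSD, and `f_k(d') ≤ f_k(d)`. -/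
theorem stmt9 {M K : ℕ} (α : ℝ) (hα : 0 < α)
    (ρ' u : Fin K → ℝ) (hρ' : ∀ k, 0 < ρ' k) (hu : ∀ k, 0 < u k)
    (g : Fin K → Fin M → ℂ) (J : Fin K → Matrix (Fin M) (Fin M) ℂ)
    (hJ : ∀ k', (J k').PosDef)
    (F : (Fin K → ℝ) → Matrix (Fin M) (Fin M) ℂ)
    (hF : ∀ d, F d = (α : ℂ) • ∑ k', ((ρ' k' * u k' / d k' : ℝ) : ℂ) • J k'
      + (1 : Matrix (Fin M) (Fin M) ℂ))
    (d d' : Fin K → ℝ) (hd : ∀ k', 0 < d k') (hd' : ∀ k', 0 < d' k')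
    (hdd : ∀ k', d' k' ≤ d k') :
    (F d' - F d).PosSemidef ∧ ((F d)⁻¹ - (F d')⁻¹).PosSemidef ∧
      ∀ k, ρ' k * (star (g k) ⬝ᵥ (F d')⁻¹.mulVec (g k)).re ≤
        ρ' k * (star (g k) ⬝ᵥ (F d)⁻¹.mulVec (g k)).re :=
  stmt9_general α hα ρ' u hρ' hu g J hJ F hF d d' hd' hdd
end

section
/- Let α, ρ > 0, u_{k'} > 0, ξ_{k'} ≥ 0, and for each m,k' let β_{mk'} ≥ γ_{mk'} ≥ 0 with not all β_{mk'} − ξ_{k'}γ_{mk'}/(1+ξ_{k'}) contributions degenerate. Define q_m(l) = M / (α·∑_{k'=1}^K (ρ·u_{k'} / ∑_{j=1}^M γ_{jk'}·l_j) · (β_{mk'} − ξ_{k'}γ_{mk'}/(1+ξ_{k'})) + 1) for l ∈ ℝ_{>0}^M, assuming each denominator ∑_j γ_{jk'}·l_j > 0. Then for every ζ > 1 and every m, ζ·q_m(l) > q_m(ζ·l) (scalability). -/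
/-- Scalability of the scalar interference function
`q_m(l) = M / (α ∑_{k'} (ρ u_{k'} / ∑_j γ_{jk'} l_j)(β_{mk'} - ξ_{k'} γ_{mk'}/(1+ξ_{k'})) + 1)`:
for every `ζ > 1`, `q_m(ζ l) < ζ q_m(l)`. -/
theorem stmt11 {M K : ℕ} (hM : 0 < M) (α ρ : ℝ) (hα : 0 < α) (hρ : 0 < ρ)
    (u ξ : Fin K → ℝ) (hu : ∀ k', 0 < u k') (hξ : ∀ k', 0 ≤ ξ k')
    (β γ : Fin M → Fin K → ℝ)
    (hγ : ∀ m k', 0 ≤ γ m k') (hβγ : ∀ m k', γ m k' ≤ β m k')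
    (l : Fin M → ℝ) (hl : ∀ j, 0 < l j)
    (hden : ∀ k' : Fin K, 0 < ∑ j, γ j k' * l j)
    (ζ : ℝ) (hζ : 1 < ζ) (m : Fin M) :
    (M : ℝ) / (α * ∑ k', (ρ * u k' / ∑ j, γ j k' * (ζ * l j)) *
        (β m k' - ξ k' * γ m k' / (1 + ξ k')) + 1) <
      ζ * ((M : ℝ) / (α * ∑ k', (ρ * u k' / ∑ j, γ j k' * l j) *
        (β m k' - ξ k' * γ m k' / (1 + ξ k')) + 1)) := by
  have hζ0 : (0:ℝ) < ζ := by linarith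
  set c : ℝ := α * ∑ k', (ρ * u k' / ∑ j, γ j k' * l j) *
        (β m k' - ξ k' * γ m k' / (1 + ξ k')) with hc
  have hterm : ∀ k' : Fin K, 0 ≤ (ρ * u k' / ∑ j, γ j k' * l j) *
      (β m k' - ξ k' * γ m k' / (1 + ξ k')) := by
    intro k'
    have h1 : (0:ℝ) < 1 + ξ k' := by have := hξ k'; linarith
    have h2 : ξ k' * γ m k' / (1 + ξ k') ≤ β m k' := by
      rw [div_le_iff₀ h1]
      nlinarith [hγ m k', hβγ m k', hξ k']
    exact mul_nonneg (div_nonneg (mul_pos hρ (hu k')).le (hden k').le) (by linarith)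
  have hcnn : 0 ≤ c := mul_nonneg hα.le (Finset.sum_nonneg fun k' _ => hterm k')
  have hrw : α * ∑ k', (ρ * u k' / ∑ j, γ j k' * (ζ * l j)) *
        (β m k' - ξ k' * γ m k' / (1 + ξ k')) = c / ζ := by
    rw [hc, Finset.mul_sum, Finset.mul_sum, Finset.sum_div]
    congr 1; ext k'
    have hs : ∑ j, γ j k' * (ζ * l j) = ζ * ∑ j, γ j k' * l j := by
      rw [Finset.mul_sum]; congr 1; ext j; ring
    rw [hs]
    have := (hden k').ne'
    field_simp
  rw [hrw]
  have hM0 : (0:ℝ) < M := by exact_mod_cast hM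
  have hd1 : (0:ℝ) < c / ζ + 1 := by positivity
  have hd2 : (0:ℝ) < c + 1 := by linarith
  rw [mul_div_assoc' ζ, div_lt_div_iff₀ hd1 hd2]
  have : ζ * (c / ζ) = c := mul_div_cancel₀ c hζ0.ne'
  nlinarith [this, mul_pos hM0 (sub_pos.mpr hζ)]
end
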